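/- Let 1 < q₂ ≤ q₁ < ∞, A ∈ R^{m×N}, and set r = q₂(q₁−1)/(q₁(q₂−1)). For any s with 1 ≤ s ≤ N^{1/r}, ρ_{q₂, s^r}(A) ≥ s^{−r} ρ_{q₁, s^r}(A). -/

import Mathlib

/-!
Hölder's inequality gives `‖z‖_{q₂} ≤ ‖z‖₁ ^ (1 - θ) * ‖z‖_{q₁} ^ θ` with `θ = 1 / r`, which makes
the sparsity `s_q(z)` nonincreasing in `q`: every `z` admissible for `ρ_{q₂,t}` is admissible for
`ρ_{q₁,t}`. For such `z`, `‖z‖_{q₂} ≤ ‖z‖₁ ≤ s_{q₁}(z) ‖z‖_{q₁} ≤ t ‖z‖_{q₁}`, because the ratio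
`‖z‖₁ / ‖z‖_{q₁} ≥ 1` is at most its own power `q₁ / (q₁ - 1) ≥ 1`. Take `t = s ^ r`.
-/

open Finset Matrix

noncomputable def l1 {N : ℕ} (z : Fin N → ℝ) : ℝ := ∑ i, |z i|
noncomputable def lq {N : ℕ} (q : ℝ) (z : Fin N → ℝ) : ℝ := (∑ i, |z i| ^ q) ^ (1/q)
noncomputable def l2 {m : ℕ} (v : Fin m → ℝ) : ℝ := Real.sqrt (∑ i, (v i)^2)
noncomputable def linf {N : ℕ} (z : Fin N → ℝ) : ℝ := ⨆ i, |z i|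
open scoped Classical in
noncomputable def l0 {N : ℕ} (z : Fin N → ℝ) : ℕ := (Finset.univ.filter (fun i => z i ≠ 0)).card
noncomputable def sparsityQ {N : ℕ} (q : ℝ) (z : Fin N → ℝ) : ℝ := (l1 z / lq q z) ^ (q/(q-1))
noncomputable def cmsv {m N : ℕ} (q s : ℝ) (A : Matrix (Fin m) (Fin N) ℝ) : ℝ :=
  sInf { r | ∃ z : Fin N → ℝ, z ≠ 0 ∧ sparsityQ q z ≤ s ∧ r = l2 (A.mulVec z) / lq q z }

section Norms

variable {N : ℕ}

lemma l1_nonneg (z : Fin N → ℝ) : 0 ≤ l1 z :=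
  sum_nonneg fun _ _ => abs_nonneg _

lemma l1_pos {z : Fin N → ℝ} (hz : z ≠ 0) : 0 < l1 z := by
  obtain ⟨i, hi⟩ := Function.ne_iff.mp hz
  exact sum_pos' (fun _ _ => abs_nonneg _) ⟨i, mem_univ i, abs_pos.mpr hi⟩

lemma lq_nonneg (q : ℝ) (z : Fin N → ℝ) : 0 ≤ lq q z :=
  Real.rpow_nonneg (sum_nonneg fun _ _ => Real.rpow_nonneg (abs_nonneg _) _) _

lemma lq_pos (q : ℝ) {z : Fin N → ℝ} (hz : z ≠ 0) : 0 < lq q z := by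
  obtain ⟨i, hi⟩ := Function.ne_iff.mp hz
  exact Real.rpow_pos_of_pos (sum_pos' (fun _ _ => Real.rpow_nonneg (abs_nonneg _) _)
    ⟨i, mem_univ i, Real.rpow_pos_of_pos (abs_pos.mpr hi) _⟩) _

lemma lq_rpow {q : ℝ} (hq : q ≠ 0) (z : Fin N → ℝ) : lq q z ^ q = ∑ i, |z i| ^ q := by
  rw [lq, ← Real.rpow_mul (sum_nonneg fun _ _ => Real.rpow_nonneg (abs_nonneg _) _),
    one_div_mul_cancel hq, Real.rpow_one]

lemma lq_le_l1 {q : ℝ} (hq : 1 ≤ q) (z : Fin N → ℝ) : lq q z ≤ l1 z := by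
  have hq0 : 0 < q := zero_lt_one.trans_le hq
  rw [← Real.rpow_le_rpow_iff (lq_nonneg q z) (l1_nonneg z) hq0, lq_rpow hq0.ne']
  calc ∑ i, |z i| ^ q = ∑ i, |z i| * |z i| ^ (q - 1) := by
        refine sum_congr rfl fun i _ => ?_
        rw [← Real.rpow_one_add' (abs_nonneg _) (by linarith), add_sub_cancel]
    _ ≤ ∑ i, |z i| * l1 z ^ (q - 1) := by
        gcongr with i
        exact single_le_sum (fun j _ => abs_nonneg (z j)) (mem_univ i)
    _ = l1 z ^ q := by
        rw [← sum_mul, ← l1, ← Real.rpow_one_add' (l1_nonneg z) (by linarith), add_sub_cancel]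

/-- Hölder's inequality applied to `|z i| = |z i| ^ (1 - θ) * |z i| ^ θ`. -/
lemma lq_le_l1_rpow_mul_lq_rpow (z : Fin N → ℝ) {p q θ : ℝ} (hq : 0 < q) (hθ₀ : 0 < θ)
    (hθ₁ : θ < 1) (hp : p⁻¹ = 1 - θ + θ / q) :
    lq p z ≤ l1 z ^ (1 - θ) * lq q z ^ θ := by
  have hp₀ : 0 < p := inv_pos.mp (by rw [hp]; have := div_pos hθ₀ hq; linarith)
  have htriple : Real.HolderTriple (1 - θ)⁻¹ (q / θ) p :=
    ⟨by rw [inv_inv, inv_div, hp], inv_pos.mpr (by linarith), div_pos hq hθ₀⟩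
  have holder := Real.Lr_rpow_le_Lp_mul_Lq_of_nonneg univ htriple
    (f := fun i => |z i| ^ (1 - θ)) (g := fun i => |z i| ^ θ)
    (fun _ _ => by positivity) (fun _ _ => by positivity)
  simp only [← Real.rpow_mul (abs_nonneg _),
    ← Real.rpow_add' (abs_nonneg _) (by simp : 1 - θ + θ ≠ 0), sub_add_cancel,
    mul_inv_cancel₀ (sub_ne_zero.2 hθ₁.ne'), mul_div_cancel₀ _ hθ₀.ne', Real.rpow_one] at holder
  have hl1 := l1_nonneg z
  have hlq := lq_nonneg q z
  rw [← Real.rpow_le_rpow_iff (lq_nonneg p z) (by positivity) hp₀]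
  calc lq p z ^ p = ∑ i, |z i| ^ p := lq_rpow hp₀.ne' z
    _ ≤ l1 z ^ (p / (1 - θ)⁻¹) * (lq q z ^ q) ^ (p / (q / θ)) := by rwa [lq_rpow hq.ne']
    _ = (l1 z ^ (1 - θ) * lq q z ^ θ) ^ p := by
        rw [Real.mul_rpow (by positivity) (by positivity), ← Real.rpow_mul hl1,
          ← Real.rpow_mul hlq, ← Real.rpow_mul hlq]
        congr 2 <;> field_simp

lemma sparsityQ_le_sparsityQ {p q : ℝ} (hp : 1 < p) (hpq : p ≤ q) {z : Fin N → ℝ} (hz : z ≠ 0) :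
    sparsityQ q z ≤ sparsityQ p z := by
  obtain rfl | hpq := hpq.eq_or_lt
  · rfl
  have hq : 1 < q := hp.trans hpq
  set θ := q * (p - 1) / (p * (q - 1)) with hθ
  have hθ₀ : 0 < θ := div_pos (by nlinarith) (by nlinarith)
  have hθ₁ : θ < 1 := (div_lt_one (by nlinarith)).2 (by nlinarith)
  have hp₁ : p - 1 ≠ 0 := by linarith
  have hq₁ : q - 1 ≠ 0 := by linarith
  have hinterp : lq p z ≤ l1 z ^ (1 - θ) * lq q z ^ θ :=
    lq_le_l1_rpow_mul_lq_rpow z (by linarith) hθ₀ hθ₁ (by rw [hθ]; field_simp; ring)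
  have hl1 := l1_pos hz
  have hlp := lq_pos p hz
  have hlq := lq_pos q hz
  have hratio : (l1 z / lq q z) ^ θ ≤ l1 z / lq p z := by
    rw [Real.div_rpow hl1.le hlq.le, div_le_div_iff₀ (by positivity) hlp]
    calc l1 z ^ θ * lq p z ≤ l1 z ^ θ * (l1 z ^ (1 - θ) * lq q z ^ θ) := by gcongr
      _ = l1 z * lq q z ^ θ := by
        rw [← mul_assoc, ← Real.rpow_add hl1, add_sub_cancel, Real.rpow_one]
  calc sparsityQ q z = ((l1 z / lq q z) ^ θ) ^ (p / (p - 1)) := by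
        rw [sparsityQ, ← Real.rpow_mul (by positivity), hθ]
        congr 1
        field_simp
    _ ≤ sparsityQ p z :=
        Real.rpow_le_rpow (by positivity) hratio (div_pos (by linarith) (by linarith)).le

lemma l1_le_sparsityQ_mul_lq {q : ℝ} (hq : 1 < q) {z : Fin N → ℝ} (hz : z ≠ 0) :
    l1 z ≤ sparsityQ q z * lq q z := by
  have hlq := lq_pos q hz
  rw [← div_le_iff₀ hlq]
  exact Real.self_le_rpow_of_one_le ((one_le_div hlq).2 (lq_le_l1 hq.le z))
    ((one_le_div (by linarith)).2 (by linarith))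

lemma sparsityQ_single {q : ℝ} (hq : q ≠ 0) (i : Fin N) : sparsityQ q (Pi.single i 1) = 1 := by
  simp [sparsityQ, l1, lq, Pi.single_apply, apply_ite, Real.zero_rpow hq]

end Norms

section CMSV

variable {m N : ℕ} {q t : ℝ} (A : Matrix (Fin m) (Fin N) ℝ)

lemma cmsv_le {z : Fin N → ℝ} (hz : z ≠ 0) (hzt : sparsityQ q z ≤ t) :
    cmsv q t A ≤ l2 (A *ᵥ z) / lq q z :=
  csInf_le ⟨0, by rintro _ ⟨w, -, -, rfl⟩; exact div_nonneg (Real.sqrt_nonneg _) (lq_nonneg _ _)⟩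
    ⟨z, hz, hzt, rfl⟩

lemma le_cmsv [NeZero N] {b : ℝ} (hq : q ≠ 0) (ht : 1 ≤ t)
    (h : ∀ z : Fin N → ℝ, z ≠ 0 → sparsityQ q z ≤ t → b ≤ l2 (A *ᵥ z) / lq q z) :
    b ≤ cmsv q t A :=
  le_csInf ⟨_, Pi.single 0 1, by simp, (sparsityQ_single hq 0).trans_le ht, rfl⟩
    (by rintro _ ⟨z, hz, hzt, rfl⟩; exact h z hz hzt)

-- There are no nonzero vectors, so this is the junk value `sInf ∅ = 0`.
lemma cmsv_of_fin_zero (B : Matrix (Fin m) (Fin 0) ℝ) : cmsv q t B = 0 := by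
  simp [cmsv, funext_iff]

theorem inv_mul_cmsv_le_cmsv {q₁ q₂ : ℝ} (hq₂ : 1 < q₂) (hq : q₂ ≤ q₁) (ht : 1 ≤ t) :
    t⁻¹ * cmsv q₁ t A ≤ cmsv q₂ t A := by
  obtain rfl | hN := eq_or_ne N 0
  · simp [cmsv_of_fin_zero]
  have : NeZero N := ⟨hN⟩
  refine le_cmsv A (by linarith) ht fun z hz hzt => ?_
  have hzt₁ : sparsityQ q₁ z ≤ t := (sparsityQ_le_sparsityQ hq₂ hq hz).trans hzt
  have hlq := lq_pos q₁ hz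
  have hnorm : lq q₂ z ≤ t * lq q₁ z := calc
    lq q₂ z ≤ l1 z := lq_le_l1 hq₂.le z
    _ ≤ sparsityQ q₁ z * lq q₁ z := l1_le_sparsityQ_mul_lq (hq₂.trans_le hq) hz
    _ ≤ t * lq q₁ z := by gcongr
  calc t⁻¹ * cmsv q₁ t A ≤ t⁻¹ * (l2 (A *ᵥ z) / lq q₁ z) := by
        gcongr
        exact cmsv_le A hz hzt₁
    _ = l2 (A *ᵥ z) / (t * lq q₁ z) := by field_simp
    _ ≤ l2 (A *ᵥ z) / lq q₂ z :=
        div_le_div_of_nonneg_left (Real.sqrt_nonneg _) (lq_pos q₂ hz) hnorm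

end CMSV

theorem stmt8_general {m N : ℕ} (A : Matrix (Fin m) (Fin N) ℝ) (q₁ q₂ s r : ℝ)
    (hq₂ : 1 < q₂) (hq : q₂ ≤ q₁)
    (hr : r = q₂ * (q₁ - 1) / (q₁ * (q₂ - 1)))
    (hs1 : 1 ≤ s) :
    s ^ (-r) * cmsv q₁ (s ^ r) A ≤ cmsv q₂ (s ^ r) A := by
  have hr₀ : 0 < r := by
    rw [hr]
    exact div_pos (by nlinarith) (by nlinarith)
  rw [Real.rpow_neg (by linarith)]
  exact inv_mul_cmsv_le_cmsv A hq₂ hq (Real.one_le_rpow hs1 hr₀.le)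

theorem stmt8 {m N : ℕ} (A : Matrix (Fin m) (Fin N) ℝ) (q₁ q₂ s r : ℝ)
    (hq₂ : 1 < q₂) (hq : q₂ ≤ q₁)
    (hr : r = q₂ * (q₁ - 1) / (q₁ * (q₂ - 1)))
    (hs1 : 1 ≤ s) (hs2 : s ≤ (N : ℝ) ^ (1/r)) :
    s ^ (-r) * cmsv q₁ (s ^ r) A ≤ cmsv q₂ (s ^ r) A :=
  stmt8_general A q₁ q₂ s r hq₂ hq hr hs1
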